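/- For all integers m ≤ n and every y = (y_m,…,y_n) ∈ {−1,1}^{n−m+1}, the partition function evaluates as Z_{m,n}(y) = 2·cosh(w_m^{(n)})·exp(Σ_{i=m+1}^{n} B(w_i^{(n)})), where the fields w_i^{(n)} are defined recursively by w_i^{(n)} = 0 for i > n and w_i^{(n)} = K·y_i + A(w_{i+1}^{(n)}) for i ≤ n. -/
import Mathlib


open Finset

/-- For all integers `m ≤ n` (encoded as `n = m + N`, `N : ℕ`) and every
`y = (y_m,…,y_n) ∈ {−1,1}^{n−m+1}`, the partition function evaluates as
`Z_{m,n}(y) = 2·cosh(w_m^{(n)})·exp(Σ_{i=m+1}^{n} B(w_i^{(n)}))`,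
where the fields `w_i^{(n)}` satisfy `w_i^{(n)} = 0` for `i > n` and
`w_i^{(n)} = K·y_i + A(w_{i+1}^{(n)})` for `i ≤ n`. Spin configurations are encoded
by `x : Fin (N+1) → Bool` via `spin`. -/
theorem stmt_2 (p ε : ℝ) (hp0 : 0 < p) (hp1 : p < 1) (hε0 : 0 < ε) (hε1 : ε < 1)
    (J K : ℝ)
    (hJ : J = (1 / 2) * Real.log ((1 - p) / p))
    (hK : K = (1 / 2) * Real.log ((1 - ε) / ε))
    (A B : ℝ → ℝ)
    (hA : ∀ u, A u = (1 / 2) * Real.log (Real.cosh (u + J) / Real.cosh (u - J)))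
    (hB : ∀ u, B u = (1 / 2) * Real.log (4 * Real.cosh (u + J) * Real.cosh (u - J)))
    (spin : Bool → ℝ) (hspin : ∀ b, spin b = if b then 1 else -1)
    (m n : ℤ) (N : ℕ) (hmn : n = m + N)
    (y : ℤ → ℝ) (hy : ∀ i ∈ Finset.Icc m n, y i = 1 ∨ y i = -1)
    (w : ℤ → ℝ)
    (hw0 : ∀ i : ℤ, n < i → w i = 0)
    (hwrec : ∀ i : ℤ, i ≤ n → w i = K * y i + A (w (i + 1))) :
    (∑ x : Fin (N + 1) → Bool,
        Real.exp (J * ∑ i : Fin N, spin (x i.castSucc) * spin (x i.succ)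
          + K * ∑ i : Fin (N + 1), spin (x i) * y (m + (i : ℕ))))
      = 2 * Real.cosh (w m) * Real.exp (∑ i ∈ Finset.Icc (m + 1) n, B (w i)) := by
  -- log identities
  have hABlog : ∀ u : ℝ, A u + B u = Real.log (2 * Real.cosh (u + J)) ∧
      B u - A u = Real.log (2 * Real.cosh (u - J)) := by
    intro u
    have c1 : (0:ℝ) < Real.cosh (u + J) := Real.cosh_pos _
    have c2 : (0:ℝ) < Real.cosh (u - J) := Real.cosh_pos _
    have l4 : Real.log 4 = 2 * Real.log 2 := by
      rw [show (4:ℝ) = 2^2 by norm_num, Real.log_pow]; push_cast; ring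
    have e1 : Real.log (Real.cosh (u + J) / Real.cosh (u - J))
        = Real.log (Real.cosh (u + J)) - Real.log (Real.cosh (u - J)) :=
      Real.log_div c1.ne' c2.ne'
    have e2 : Real.log (4 * Real.cosh (u + J) * Real.cosh (u - J))
        = Real.log 4 + Real.log (Real.cosh (u + J)) + Real.log (Real.cosh (u - J)) := by
      rw [Real.log_mul (by positivity) c2.ne', Real.log_mul (by norm_num) c1.ne']
    have e3 : Real.log (2 * Real.cosh (u + J)) = Real.log 2 + Real.log (Real.cosh (u + J)) :=
      Real.log_mul (by norm_num) c1.ne'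
    have e4 : Real.log (2 * Real.cosh (u - J)) = Real.log 2 + Real.log (Real.cosh (u - J)) :=
      Real.log_mul (by norm_num) c2.ne'
    constructor <;> rw [hA, hB] <;> rw [e1, e2] <;> rw [l4] at * <;> linarith [e3, e4]
  -- key transfer identity: the Bool sum of the last spin
  have key : ∀ (u : ℝ) (s : ℝ),
      Real.exp (u + J * s) + Real.exp (-(u + J * s) + 0)
        = Real.exp (A u * s + B u) → True := fun _ _ _ => trivial
  clear key
  have key : ∀ (u : ℝ) (b : Bool),
      (∑ c : Bool, Real.exp ((u + J * spin b) * spin c))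
        = Real.exp (A u * spin b + B u) := by
    intro u b
    have c1 : (0:ℝ) < 2 * Real.cosh (u + J) := by positivity
    have c2 : (0:ℝ) < 2 * Real.cosh (u - J) := by positivity
    rw [Fintype.sum_bool]
    cases b <;> simp only [hspin] <;> norm_num
    · have h2 : Real.exp (-A u + B u) = 2 * Real.cosh (u - J) := by
        rw [show -A u + B u = B u - A u by ring, (hABlog u).2, Real.exp_log c2]
      rw [h2, Real.cosh_eq, show J + -u = -(u - J) by ring, show u + -J = u - J by ring]
      ring
    · have h1 : Real.exp (A u + B u) = 2 * Real.cosh (u + J) := by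
        rw [(hABlog u).1, Real.exp_log c1]
      rw [h1, Real.cosh_eq, show -J + -u = -(u + J) by ring]
      ring
  have hA0 : A 0 = 0 := by
    rw [hA]
    rw [show (0:ℝ) + J = J by ring, show (0:ℝ) - J = -J by ring, Real.cosh_neg,
      div_self (Real.cosh_pos J).ne', Real.log_one, mul_zero]
  -- main induction
  have main : ∀ N' : ℕ, m + N' ≤ n →
      (∑ x : Fin (N' + 1) → Bool,
          Real.exp (J * ∑ i : Fin N', spin (x i.castSucc) * spin (x i.succ)
            + ((∑ i : Fin N', (K * y (m + (i:ℕ))) * spin (x i.castSucc))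
               + w (m + N') * spin (x (Fin.last N')))))
        = 2 * Real.cosh (w m) * Real.exp (∑ i ∈ Finset.Icc (m + 1) (m + N'), B (w i)) := by
    intro N'
    induction N' with
    | zero =>
      intro _
      rw [Fintype.sum_equiv (Equiv.funUnique (Fin 1) Bool)
        _ (fun b => Real.exp (w m * spin b)) (by
          intro x
          simp [Fin.sum_univ_zero])]
      rw [Fintype.sum_bool]
      simp only [hspin]
      norm_num
      rw [Real.cosh_eq]
      ring
    | succ N' ih =>
      intro hle
      have hle' : m + N' ≤ n := by omega
      -- split the sum via snoc
      rw [← Fintype.sum_equiv (Fin.snocEquiv (fun _ : Fin (N'+2) => Bool))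
        (fun q => Real.exp (J * ∑ i : Fin (N'+1),
            spin ((Fin.snocEquiv (fun _ => Bool) q) i.castSucc) * spin ((Fin.snocEquiv (fun _ => Bool) q) i.succ)
          + ((∑ i : Fin (N'+1), (K * y (m + (i:ℕ))) * spin ((Fin.snocEquiv (fun _ => Bool) q) i.castSucc))
             + w (m + (N'+1:ℕ)) * spin ((Fin.snocEquiv (fun _ => Bool) q) (Fin.last (N'+1))))))
        _ (fun _ => rfl)]
      rw [Fintype.sum_prod_type_right]
      simp only [Fin.snocEquiv_apply]
      have step : ∀ x' : Fin (N' + 1) → Bool,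
          (∑ b : Bool,
            Real.exp (J * ∑ i : Fin (N'+1),
                spin ((Fin.snoc x' b : Fin (N'+2) → Bool) i.castSucc) * spin ((Fin.snoc x' b : Fin (N'+2) → Bool) i.succ)
              + ((∑ i : Fin (N'+1), (K * y (m + (i:ℕ))) * spin ((Fin.snoc x' b : Fin (N'+2) → Bool) i.castSucc))
                 + w (m + ((N'+1 : ℕ):ℤ)) * spin ((Fin.snoc x' b : Fin (N'+2) → Bool) (Fin.last (N'+1))))))
          = Real.exp (B (w (m + ((N'+1 : ℕ):ℤ))))
            * Real.exp (J * ∑ i : Fin N', spin (x' i.castSucc) * spin (x' i.succ)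
              + ((∑ i : Fin N', (K * y (m + (i:ℕ))) * spin (x' i.castSucc))
                 + w (m + (N':ℕ)) * spin (x' (Fin.last N')))) := by
        intro x'
        set u := w (m + ((N'+1 : ℕ):ℤ)) with hu
        have hw' : w (m + (N':ℕ)) = K * y (m + (N':ℕ)) + A u := by
          have h := hwrec (m + (N':ℕ)) hle'
          have harg : (m + (N':ℕ) + 1 : ℤ) = m + ((N'+1:ℕ):ℤ) := by push_cast; ring
          rw [harg] at h
          exact h
        have e1 : ∀ b : Bool,
            (J * ∑ i : Fin (N'+1),
                spin ((Fin.snoc x' b : Fin (N'+2) → Bool) i.castSucc) * spin ((Fin.snoc x' b : Fin (N'+2) → Bool) i.succ)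
              + ((∑ i : Fin (N'+1), (K * y (m + (i:ℕ))) * spin ((Fin.snoc x' b : Fin (N'+2) → Bool) i.castSucc))
                 + u * spin ((Fin.snoc x' b : Fin (N'+2) → Bool) (Fin.last (N'+1)))))
            = (J * ∑ i : Fin N', spin (x' i.castSucc) * spin (x' i.succ)
                + (∑ i : Fin N', (K * y (m + (i:ℕ))) * spin (x' i.castSucc))
                + (K * y (m + (N':ℕ))) * spin (x' (Fin.last N')))
              + (u + J * spin (x' (Fin.last N'))) * spin b := by
          intro b
          rw [Fin.sum_univ_castSucc (f := fun i : Fin (N'+1) =>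
              spin ((Fin.snoc x' b : Fin (N'+2) → Bool) i.castSucc) * spin ((Fin.snoc x' b : Fin (N'+2) → Bool) i.succ)),
            Fin.sum_univ_castSucc (f := fun i : Fin (N'+1) =>
              (K * y (m + (i:ℕ))) * spin ((Fin.snoc x' b : Fin (N'+2) → Bool) i.castSucc))]
          simp only [Fin.snoc_castSucc, Fin.succ_castSucc, Fin.snoc_last, Fin.succ_last,
            Fin.coe_castSucc, Fin.val_last]
          ring
        calc (∑ b : Bool,
            Real.exp (J * ∑ i : Fin (N'+1),
                spin ((Fin.snoc x' b : Fin (N'+2) → Bool) i.castSucc) * spin ((Fin.snoc x' b : Fin (N'+2) → Bool) i.succ)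
              + ((∑ i : Fin (N'+1), (K * y (m + (i:ℕ))) * spin ((Fin.snoc x' b : Fin (N'+2) → Bool) i.castSucc))
                 + u * spin ((Fin.snoc x' b : Fin (N'+2) → Bool) (Fin.last (N'+1))))))
            = ∑ b : Bool,
              Real.exp (J * ∑ i : Fin N', spin (x' i.castSucc) * spin (x' i.succ)
                + (∑ i : Fin N', (K * y (m + (i:ℕ))) * spin (x' i.castSucc))
                + (K * y (m + (N':ℕ))) * spin (x' (Fin.last N')))
              * Real.exp ((u + J * spin (x' (Fin.last N'))) * spin b) := by
              apply Finset.sum_congr rfl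
              intro b _
              rw [e1 b, Real.exp_add]
          _ = Real.exp (J * ∑ i : Fin N', spin (x' i.castSucc) * spin (x' i.succ)
                + (∑ i : Fin N', (K * y (m + (i:ℕ))) * spin (x' i.castSucc))
                + (K * y (m + (N':ℕ))) * spin (x' (Fin.last N')))
              * ∑ b : Bool, Real.exp ((u + J * spin (x' (Fin.last N'))) * spin b) := by
              rw [← Finset.mul_sum]
          _ = _ := by
              rw [key u (x' (Fin.last N')), ← Real.exp_add, ← Real.exp_add]
              apply congrArg Real.exp
              rw [hw']
              ring
      rw [Finset.sum_congr rfl (fun x' _ => step x'), ← Finset.mul_sum, ih hle']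
      have hIcc : Finset.Icc (m+1) (m + ((N'+1:ℕ):ℤ))
          = insert (m + ((N'+1:ℕ):ℤ)) (Finset.Icc (m+1) (m + (N':ℕ))) := by
        ext z
        simp only [Finset.mem_Icc, Finset.mem_insert]
        push_cast
        omega
      rw [hIcc, Finset.sum_insert (by simp only [Finset.mem_Icc]; push_cast; omega),
        Real.exp_add]
      ring
  -- finish: rewrite the goal to the main claim's shape
  have hfin := main N (by omega)
  have hwn : w (m + (N:ℕ)) = K * y (m + (N:ℕ)) := by
    have h := hwrec (m + (N:ℕ)) (by omega)
    have h0 : w (m + (N:ℕ) + 1) = 0 := hw0 _ (by omega)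
    rw [h0, hA0, add_zero] at h
    exact h
  have hshape : ∀ x : Fin (N + 1) → Bool,
      (J * ∑ i : Fin N, spin (x i.castSucc) * spin (x i.succ)
        + K * ∑ i : Fin (N + 1), spin (x i) * y (m + (i : ℕ)))
      = (J * ∑ i : Fin N, spin (x i.castSucc) * spin (x i.succ)
        + ((∑ i : Fin N, (K * y (m + (i:ℕ))) * spin (x i.castSucc))
           + w (m + (N:ℕ)) * spin (x (Fin.last N)))) := by
    intro x
    rw [Fin.sum_univ_castSucc (f := fun i : Fin (N+1) => spin (x i) * y (m + (i:ℕ)))]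
    simp only [Fin.coe_castSucc, Fin.val_last]
    rw [hwn, mul_add]
    congr 1
    congr 1
    · rw [Finset.mul_sum]
      exact Finset.sum_congr rfl fun i _ => by ring
    · ring
  rw [Finset.sum_congr rfl (fun x _ => by rw [hshape x]), hfin, hmn]
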